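/- arXiv:0908.1847 — 6 statements merged into one kernel-verified Lean document; each statement's English description precedes it below -/
import Mathlib

section
/- Let m, l ≥ 2 be integers and define h : ℝ² → ℝ by h(x) = x₁^m · x₂^l. Then for every u > 0 there exists a constant A > 0 (depending on u, m, l) such that for all x, y ∈ ℝ²: |h(x + y) − h(x)| ≤ u·|h(x)| + A·(|x₁|^m·|y₂|^l + |y₁|^m·|x₂|^l + |y₁|^m·|y₂|^l). -/
/-!
Expanding `(a + b)^n` gives `|(a + b)^n - a^n| ≤ (|a| + |b|)^n - |a|^n`. When `|b| ≤ t|a|` this is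
at most `((1 + t)^n - 1)|a|^n`, which is small for small `t`; otherwise `|a| < |b|/t` and it is at
most `(1 + 1/t)^n |b|^n`. Applying this to both factors of `x₁^m x₂^l` and writing
`PQ - pq = (P - p)q + p(Q - q) + (P - p)(Q - q)` gives the bound.
-/

open Filter Topology

theorem norm_add_pow_sub_pow_le {R : Type*} [NormedRing R] [NormOneClass R] (a b : R) (n : ℕ) :
    ‖(a + b) ^ n - a ^ n‖ ≤ (‖a‖ + ‖b‖) ^ n - ‖a‖ ^ n := by
  induction n with
  | zero => simp
  | succ n ih =>
    have hsplit : (a + b) ^ (n + 1) - a ^ (n + 1) =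
        (a + b) * ((a + b) ^ n - a ^ n) + b * a ^ n := by
      simp only [pow_succ']; noncomm_ring
    calc ‖(a + b) ^ (n + 1) - a ^ (n + 1)‖
        ≤ ‖a + b‖ * ‖(a + b) ^ n - a ^ n‖ + ‖b‖ * ‖a ^ n‖ := by
          rw [hsplit]
          exact (norm_add_le _ _).trans (add_le_add (norm_mul_le _ _) (norm_mul_le _ _))
      _ ≤ (‖a‖ + ‖b‖) * ((‖a‖ + ‖b‖) ^ n - ‖a‖ ^ n) + ‖b‖ * ‖a‖ ^ n := by
          gcongr ?_ * ?_ + _ * ?_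
          exacts [norm_add_le a b, norm_pow_le a n]
      _ = (‖a‖ + ‖b‖) ^ (n + 1) - ‖a‖ ^ (n + 1) := by ring

theorem exists_abs_add_pow_sub_pow_le (n : ℕ) {ε : ℝ} (hε : 0 < ε) :
    ∃ C : ℝ, 0 < C ∧ ∀ a b : ℝ, |(a + b) ^ n - a ^ n| ≤ ε * |a| ^ n + C * |b| ^ n := by
  have hcont : Tendsto (fun t : ℝ => (1 + t) ^ n) (𝓝[>] 0) (𝓝 1) := by
    have := (show Continuous fun t : ℝ => (1 + t) ^ n by fun_prop).tendsto 0
    simpa using this.mono_left nhdsWithin_le_nhds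
  obtain ⟨t, hsmall, ht⟩ : ∃ t : ℝ, (1 + t) ^ n < 1 + ε ∧ 0 < t :=
    ((hcont.eventually (gt_mem_nhds (lt_add_of_pos_right 1 hε))).and self_mem_nhdsWithin).exists
  refine ⟨(1 / t + 1) ^ n, by positivity, fun a b => ?_⟩
  have hbinom := norm_add_pow_sub_pow_le a b n
  simp only [Real.norm_eq_abs] at hbinom
  rcases le_or_gt |b| (t * |a|) with hb | hb
  · calc |(a + b) ^ n - a ^ n| ≤ ((1 + t) * |a|) ^ n - |a| ^ n :=
          hbinom.trans (by gcongr; linarith)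
      _ = ((1 + t) ^ n - 1) * |a| ^ n := by rw [mul_pow]; ring
      _ ≤ ε * |a| ^ n := by gcongr; linarith
      _ ≤ ε * |a| ^ n + (1 / t + 1) ^ n * |b| ^ n :=
          le_add_of_nonneg_right (by positivity)
  · have ha : |a| ≤ 1 / t * |b| := by rw [one_div_mul_eq_div, le_div_iff₀ ht]; linarith
    calc |(a + b) ^ n - a ^ n| ≤ (|a| + |b|) ^ n := hbinom.trans (by simp)
      _ ≤ ((1 / t + 1) * |b|) ^ n := by gcongr; linarith
      _ = (1 / t + 1) ^ n * |b| ^ n := mul_pow _ _ _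
      _ ≤ ε * |a| ^ n + (1 / t + 1) ^ n * |b| ^ n :=
          le_add_of_nonneg_left (by positivity)

theorem norm_mul_sub_mul_le {R : Type*} [NonUnitalNormedRing R] (p q P Q : R) :
    ‖P * Q - p * q‖ ≤ ‖P - p‖ * ‖q‖ + ‖p‖ * ‖Q - q‖ + ‖P - p‖ * ‖Q - q‖ := by
  have hsplit : P * Q - p * q = (P - p) * q + p * (Q - q) + (P - p) * (Q - q) := by noncomm_ring
  rw [hsplit]
  refine (norm_add₃_le ..).trans (add_le_add (add_le_add ?_ ?_) ?_) <;> exact norm_mul_le _ _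

theorem abs_mul_sub_mul_le_of_abs_sub_le {p q P Q s t ε C₁ C₂ : ℝ} (hε₀ : 0 ≤ ε) (hε₁ : ε ≤ 1)
    (hs : 0 ≤ s) (ht : 0 ≤ t) (hC₁ : 0 ≤ C₁) (hC₂ : 0 ≤ C₂)
    (hP : |P - p| ≤ ε * |p| + C₁ * s) (hQ : |Q - q| ≤ ε * |q| + C₂ * t) :
    |P * Q - p * q| ≤
      3 * ε * |p * q| + (2 * C₁ + 2 * C₂ + C₁ * C₂) * (|p| * t + s * |q| + s * t) := by
  have hp := abs_nonneg p
  have hq := abs_nonneg q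
  calc |P * Q - p * q| ≤ |P - p| * |q| + |p| * |Q - q| + |P - p| * |Q - q| :=
        norm_mul_sub_mul_le p q P Q
    _ ≤ (ε * |p| + C₁ * s) * |q| + |p| * (ε * |q| + C₂ * t) +
        (ε * |p| + C₁ * s) * (ε * |q| + C₂ * t) := by
      have := (abs_nonneg _).trans hP
      gcongr
    _ ≤ _ := by
      rw [abs_mul]
      have h1ε := sub_nonneg.2 hε₁
      nlinarith [mul_nonneg (mul_nonneg hp hq) h1ε, mul_nonneg (mul_nonneg hp ht) hC₁,
        mul_nonneg (mul_nonneg hs hq) hC₂, mul_nonneg (mul_nonneg hs ht) hC₁,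
        mul_nonneg (mul_nonneg hs ht) hC₂, mul_nonneg (mul_nonneg (mul_nonneg hp ht) hC₂) h1ε,
        mul_nonneg (mul_nonneg (mul_nonneg hs hq) hC₁) h1ε, mul_nonneg hε₀ (mul_nonneg hp hq)]

theorem monomial_perturbation_bound_general (m l : ℕ) (u : ℝ) (hu : 0 < u) :
    ∃ A : ℝ, 0 < A ∧ ∀ x y : ℝ × ℝ,
      |(x.1 + y.1) ^ m * (x.2 + y.2) ^ l - x.1 ^ m * x.2 ^ l| ≤
        u * |x.1 ^ m * x.2 ^ l| +
          A * (|x.1| ^ m * |y.2| ^ l + |y.1| ^ m * |x.2| ^ l + |y.1| ^ m * |y.2| ^ l) := by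
  set ε := min 1 (u / 3)
  have hε : 0 < ε := lt_min one_pos (by positivity)
  obtain ⟨C₁, hC₁, H₁⟩ := exists_abs_add_pow_sub_pow_le m hε
  obtain ⟨C₂, hC₂, H₂⟩ := exists_abs_add_pow_sub_pow_le l hε
  refine ⟨2 * C₁ + 2 * C₂ + C₁ * C₂, by positivity, fun x y => ?_⟩
  have hP : |(x.1 + y.1) ^ m - x.1 ^ m| ≤ ε * |x.1 ^ m| + C₁ * |y.1| ^ m := by
    rw [abs_pow]; exact H₁ x.1 y.1
  have hQ : |(x.2 + y.2) ^ l - x.2 ^ l| ≤ ε * |x.2 ^ l| + C₂ * |y.2| ^ l := by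
    rw [abs_pow]; exact H₂ x.2 y.2
  have h3ε : 3 * ε ≤ u := by linarith [min_le_right 1 (u / 3)]
  calc _ ≤ 3 * ε * |x.1 ^ m * x.2 ^ l| + (2 * C₁ + 2 * C₂ + C₁ * C₂) *
        (|x.1 ^ m| * |y.2| ^ l + |y.1| ^ m * |x.2 ^ l| + |y.1| ^ m * |y.2| ^ l) :=
      abs_mul_sub_mul_le_of_abs_sub_le hε.le (min_le_left _ _) (by positivity) (by positivity)
        hC₁.le hC₂.le hP hQ
    _ ≤ _ := by rw [abs_pow, abs_pow]; gcongr

/-- Let `m, l ≥ 2` be integers and `h(x) = x₁^m · x₂^l` on `ℝ²`. For every `u > 0` there is a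
constant `A > 0` such that for all `x, y ∈ ℝ²`:
`|h(x+y) − h(x)| ≤ u·|h(x)| + A·(|x₁|^m·|y₂|^l + |y₁|^m·|x₂|^l + |y₁|^m·|y₂|^l)`. -/
theorem monomial_perturbation_bound (m l : ℕ) (hm : 2 ≤ m) (hl : 2 ≤ l)
    (u : ℝ) (hu : 0 < u) :
    ∃ A : ℝ, 0 < A ∧ ∀ x y : ℝ × ℝ,
      |(x.1 + y.1) ^ m * (x.2 + y.2) ^ l - x.1 ^ m * x.2 ^ l| ≤
        u * |x.1 ^ m * x.2 ^ l| +
          A * (|x.1| ^ m * |y.2| ^ l + |y.1| ^ m * |x.2| ^ l + |y.1| ^ m * |y.2| ^ l) :=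
  monomial_perturbation_bound_general m l u hu
end

section
/- There exists a universal constant K > 0 with the following property: for all integers u, v ≥ 0 with u + v ≥ 2, all real numbers δ ∈ (0, 1] and ρ ∈ (0, 1/2], and all x, y ∈ ℝ², if δ < ‖x + y‖ ≤ 2ρ then |(x₁ + y₁)^u · (x₂ + y₂)^v| ≤ K·(‖x‖⁴/δ² + min(‖y‖², ρ²)). -/
/-!
With `z = x + y`, the monomial is bounded by `‖z‖ ^ (u + v) ≤ ‖z‖ ^ 2`, because `‖z‖ ≤ 2ρ ≤ 1`.
It remains to bound `‖z‖ ^ 2`. The bound `‖z‖ ^ 2 ≤ 4ρ ^ 2` is immediate. For the other one,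
either `‖y‖ ≥ ‖z‖ / 2`, or `‖x‖ > ‖z‖ / 2 > δ / 2`, and then `‖z‖ ^ 2 < 4‖x‖ ^ 2 < 16‖x‖ ^ 4 / δ ^ 2`.
-/

theorem EuclideanSpace.abs_apply_pow_mul_apply_pow_le {ι : Type*} [Fintype ι]
    (z : EuclideanSpace ℝ ι) (i j : ι) (u v : ℕ) :
    |z i ^ u * z j ^ v| ≤ ‖z‖ ^ (u + v) := by
  rw [abs_mul, abs_pow, abs_pow, pow_add]
  have hi : |z i| ≤ ‖z‖ := PiLp.norm_apply_le z i
  have hj : |z j| ≤ ‖z‖ := PiLp.norm_apply_le z j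
  gcongr

theorem sq_le_of_le_add_of_lt {a b c δ : ℝ} (ha : 0 ≤ a) (hb : 0 ≤ b) (hδ : 0 < δ)
    (hc : c ≤ a + b) (hδc : δ < c) :
    c ^ 2 ≤ 16 * (a ^ 4 / δ ^ 2 + b ^ 2) := by
  have hA : 0 ≤ a ^ 4 / δ ^ 2 := by positivity
  rcases le_or_gt a (c / 2) with hac | hac
  · nlinarith
  · have hδa : δ ^ 2 ≤ 4 * a ^ 2 := by nlinarith
    have h4 : a ^ 2 / 4 ≤ a ^ 4 / δ ^ 2 := by
      rw [div_le_div_iff₀ (by norm_num) (by positivity)]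
      nlinarith [mul_le_mul_of_nonneg_left hδa (sq_nonneg a)]
    nlinarith

theorem norm_add_sq_le {E : Type*} [SeminormedAddCommGroup E] {x y : E} {δ ρ : ℝ}
    (hδ : 0 < δ) (hδxy : δ < ‖x + y‖) (hxyρ : ‖x + y‖ ≤ 2 * ρ) :
    ‖x + y‖ ^ 2 ≤ 16 * (‖x‖ ^ 4 / δ ^ 2 + min (‖y‖ ^ 2) (ρ ^ 2)) := by
  rcases min_choice (‖y‖ ^ 2) (ρ ^ 2) with h | h <;> rw [h]
  · exact sq_le_of_le_add_of_lt (norm_nonneg x) (norm_nonneg y) hδ (norm_add_le x y) hδxy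
  · have hA : 0 ≤ ‖x‖ ^ 4 / δ ^ 2 := by positivity
    nlinarith [norm_nonneg (x + y)]

/-- There is a universal constant `K > 0` such that for all integers `u, v ≥ 0` with `u + v ≥ 2`,
all `δ ∈ (0, 1]` and `ρ ∈ (0, 1/2]`, and all `x, y ∈ ℝ²` (Euclidean norm), if
`δ < ‖x + y‖ ≤ 2ρ` then `|(x₁+y₁)^u · (x₂+y₂)^v| ≤ K·(‖x‖⁴/δ² + min(‖y‖², ρ²))`. -/
theorem truncated_monomial_bound :
    ∃ K : ℝ, 0 < K ∧ ∀ (u v : ℕ), 2 ≤ u + v → ∀ (δ ρ : ℝ),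
      0 < δ → δ ≤ 1 → 0 < ρ → ρ ≤ 1 / 2 → ∀ x y : EuclideanSpace ℝ (Fin 2),
        δ < ‖x + y‖ → ‖x + y‖ ≤ 2 * ρ →
          |(x 0 + y 0) ^ u * (x 1 + y 1) ^ v| ≤
            K * (‖x‖ ^ 4 / δ ^ 2 + min (‖y‖ ^ 2) (ρ ^ 2)) := by
  refine ⟨16, by norm_num, fun u v huv δ ρ hδ _ _ hρ x y hδxy hxyρ => ?_⟩
  calc |(x 0 + y 0) ^ u * (x 1 + y 1) ^ v| ≤ ‖x + y‖ ^ (u + v) :=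
        EuclideanSpace.abs_apply_pow_mul_apply_pow_le (x + y) 0 1 u v
    _ ≤ ‖x + y‖ ^ 2 := pow_le_pow_of_le_one (norm_nonneg _) (by linarith) huv
    _ ≤ 16 * (‖x‖ ^ 4 / δ ^ 2 + min (‖y‖ ^ 2) (ρ ^ 2)) := norm_add_sq_le hδ hδxy hxyρ
end

section
/- Fix indices m, l ∈ {1, 2} and define ḡ : ℝ² → ℝ by ḡ(x) = x_m · x_l. For every w > 0 there exists a constant A > 0 (depending only on w) such that for all η > 0 and all x, y, z ∈ ℝ²: |ḡ(x + y + z)·1_{{‖x+y+z‖ ≤ η}} − ḡ(x)| ≤ w·‖x‖² + A·((‖x‖⁴ + ‖y‖⁴)/η² + ‖y‖² + min(‖z‖², η²)). -/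
/-!
Write `a, b, c` for `‖x‖, ‖y‖, ‖z‖` and `R` for the bracket multiplying `A`. When `x + y + z` is
kept and `c ≤ η`, the increment of the quadratic form is at most `(b + c)(2a + b + c)`, and AM-GM
splits the cross term `2a(b + c)` into `w a² + (b + c)² / w`. In the remaining cases
`η ≤ a + b + c`, so one of `a, b, c` is at least `η / 3`; together with `2a² ≤ η² + a⁴ / η²` this
gives `a² ≤ 9R`, which controls `ḡ(x)`, and `ḡ(x + y + z)` costs at most `η² ≤ R` when `c > η`.
-/

noncomputable def incrementRemainder (η a b c : ℝ) : ℝ :=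
  (a ^ 4 + b ^ 4) / η ^ 2 + b ^ 2 + min (c ^ 2) (η ^ 2)

lemma incrementRemainder_nonneg (η a b c : ℝ) : 0 ≤ incrementRemainder η a b c := by
  unfold incrementRemainder
  positivity

lemma sq_add_sq_le_incrementRemainder {η c : ℝ} (hc : 0 ≤ c) (hcη : c ≤ η) (a b : ℝ) :
    b ^ 2 + c ^ 2 ≤ incrementRemainder η a b c := by
  have hmin : min (c ^ 2) (η ^ 2) = c ^ 2 := min_eq_left (by gcongr)
  have hD : 0 ≤ (a ^ 4 + b ^ 4) / η ^ 2 := by positivity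
  rw [incrementRemainder, hmin]
  linarith

lemma sq_le_incrementRemainder {η c : ℝ} (hη : 0 ≤ η) (hηc : η ≤ c) (a b : ℝ) :
    η ^ 2 ≤ incrementRemainder η a b c := by
  have hmin : min (c ^ 2) (η ^ 2) = η ^ 2 := min_eq_right (by gcongr)
  have hD : 0 ≤ (a ^ 4 + b ^ 4) / η ^ 2 := by positivity
  rw [incrementRemainder, hmin]
  nlinarith

lemma two_mul_sq_le_sq_add_pow_four_div {η : ℝ} (hη : η ≠ 0) (a : ℝ) :
    2 * a ^ 2 ≤ η ^ 2 + a ^ 4 / η ^ 2 := by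
  have hη2 : 0 < η ^ 2 := by positivity
  rw [← sub_nonneg]
  have key : η ^ 2 + a ^ 4 / η ^ 2 - 2 * a ^ 2 = (η ^ 2 - a ^ 2) ^ 2 / η ^ 2 := by
    field_simp
    ring
  rw [key]
  positivity

lemma sq_le_nine_mul_incrementRemainder {η a b c : ℝ} (hη : 0 < η) (h : η ≤ a + b + c) :
    a ^ 2 ≤ 9 * incrementRemainder η a b c := by
  unfold incrementRemainder
  have hb2 : 0 ≤ b ^ 4 / η ^ 2 := by positivity
  have hM : 0 ≤ min (c ^ 2) (η ^ 2) := by positivity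
  rcases le_or_gt η (3 * a) with ha | ha
  · have ha4 : a ^ 2 ≤ 9 * (a ^ 4 / η ^ 2) := by
      rw [← mul_div_assoc, le_div_iff₀ (by positivity)]
      nlinarith [mul_le_mul_of_nonneg_left (pow_le_pow_left₀ hη.le ha 2) (sq_nonneg a)]
    rw [add_div]
    nlinarith
  · have hη2 : η ^ 2 ≤ 9 * (b ^ 2 + min (c ^ 2) (η ^ 2)) := by
      rcases le_or_gt η (3 * b) with hb3 | hb3
      · nlinarith [pow_le_pow_left₀ hη.le hb3 2]
      · have hc3 : η ≤ 3 * c := by linarith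
        have : η ^ 2 ≤ 9 * min (c ^ 2) (η ^ 2) := by
          rw [mul_min_of_nonneg _ _ (by norm_num)]
          exact le_min (by nlinarith [pow_le_pow_left₀ hη.le hc3 2]) (by nlinarith)
        nlinarith
    have := two_mul_sq_le_sq_add_pow_four_div hη.ne' a
    have ha4 : 0 ≤ a ^ 4 / η ^ 2 := by positivity
    rw [add_div]
    nlinarith [sq_nonneg a]

section Coordinates

variable {ι : Type*} [Fintype ι]

lemma abs_apply_mul_apply_le (u : EuclideanSpace ℝ ι) (i j : ι) : |u i * u j| ≤ ‖u‖ ^ 2 := by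
  rw [abs_mul, sq]
  exact mul_le_mul (PiLp.norm_apply_le u i) (PiLp.norm_apply_le u j) (abs_nonneg _)
    (norm_nonneg _)

lemma abs_apply_mul_apply_sub_le (u v : EuclideanSpace ℝ ι) (i j : ι) :
    |u i * u j - v i * v j| ≤ ‖u - v‖ * (‖u‖ + ‖v‖) := by
  have hi : |u i - v i| ≤ ‖u - v‖ := PiLp.norm_apply_le (u - v) i
  have hj : |u j - v j| ≤ ‖u - v‖ := PiLp.norm_apply_le (u - v) j
  calc |u i * u j - v i * v j| = |(u i - v i) * u j + v i * (u j - v j)| := by ring_nf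
    _ ≤ |u i - v i| * |u j| + |v i| * |u j - v j| := by
      rw [← abs_mul, ← abs_mul]
      exact abs_add_le _ _
    _ ≤ ‖u - v‖ * ‖u‖ + ‖v‖ * ‖u - v‖ := by
      gcongr
      exacts [PiLp.norm_apply_le u j, PiLp.norm_apply_le v i]
    _ = ‖u - v‖ * (‖u‖ + ‖v‖) := by ring

end Coordinates

theorem abs_truncated_sub_le {E : Type*} [SeminormedAddCommGroup E] (g : E → ℝ)
    (hg : ∀ u, |g u| ≤ ‖u‖ ^ 2) (hg_sub : ∀ u v, |g u - g v| ≤ ‖u - v‖ * (‖u‖ + ‖v‖))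
    {w η : ℝ} (hw : 0 < w) (hη : 0 < η) (x y z : E) :
    |(if ‖x + y + z‖ ≤ η then g (x + y + z) else 0) - g x| ≤
      w * ‖x‖ ^ 2 + (10 + 2 * w⁻¹) * incrementRemainder η ‖x‖ ‖y‖ ‖z‖ := by
  set R := incrementRemainder η ‖x‖ ‖y‖ ‖z‖
  have hR : 0 ≤ R := incrementRemainder_nonneg _ _ _ _
  have hwR : 0 ≤ w * ‖x‖ ^ 2 := by positivity
  have hw' : 0 ≤ w⁻¹ := by positivity
  have hxyz : ‖x + y + z‖ ≤ ‖x‖ + ‖y‖ + ‖z‖ := norm_add₃_le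
  have hx_small (h : η ≤ ‖x‖ + ‖y‖ + ‖z‖) : |g x| ≤ 9 * R :=
    (hg x).trans (sq_le_nine_mul_incrementRemainder hη h)
  split_ifs with hin
  · rcases le_or_gt ‖z‖ η with hz | hz
    · have hyz : ‖x + y + z - x‖ ≤ ‖y‖ + ‖z‖ := by
        rw [add_assoc, add_sub_cancel_left]
        exact norm_add_le y z
      have hyzR : ‖y‖ ^ 2 + ‖z‖ ^ 2 ≤ R := sq_add_sq_le_incrementRemainder (norm_nonneg z) hz _ _
      calc |g (x + y + z) - g x|
          ≤ (‖y‖ + ‖z‖) * (2 * ‖x‖ + (‖y‖ + ‖z‖)) :=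
            (hg_sub _ _).trans (mul_le_mul hyz (by linarith) (by positivity) (by positivity))
        _ = 2 * ‖x‖ * (‖y‖ + ‖z‖) + (‖y‖ + ‖z‖) ^ 2 := by ring
        _ ≤ w * ‖x‖ ^ 2 + (1 + w⁻¹) * (‖y‖ + ‖z‖) ^ 2 := by
            nlinarith [two_mul_le_add_mul_sq (a := ‖x‖) (b := ‖y‖ + ‖z‖) hw]
        _ ≤ w * ‖x‖ ^ 2 + (1 + w⁻¹) * (2 * R) := by
            gcongr
            exact add_sq_le.trans (by linarith)
        _ ≤ w * ‖x‖ ^ 2 + (10 + 2 * w⁻¹) * R := by nlinarith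
    · have hη2R : η ^ 2 ≤ R := sq_le_incrementRemainder hη.le hz.le _ _
      calc |g (x + y + z) - g x| ≤ |g (x + y + z)| + |g x| := abs_sub _ _
        _ ≤ η ^ 2 + 9 * R := by
            gcongr
            · exact (hg _).trans (by gcongr)
            · exact hx_small (by linarith [norm_nonneg x, norm_nonneg y])
        _ ≤ w * ‖x‖ ^ 2 + (10 + 2 * w⁻¹) * R := by nlinarith
  · rw [zero_sub, abs_neg]
    nlinarith [hx_small (by linarith)]

/-- Fix coordinate indices `m, l` of `ℝ²` and let `ḡ(x) = x_m · x_l`. For every `w > 0` there is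
a constant `A > 0` depending only on `w` such that for all `η > 0` and all `x, y, z ∈ ℝ²`:
`|ḡ(x+y+z)·1_{‖x+y+z‖ ≤ η} − ḡ(x)| ≤ w·‖x‖² + A·((‖x‖⁴ + ‖y‖⁴)/η² + ‖y‖² + min(‖z‖², η²))`. -/
theorem truncated_product_increment_bound (m l : Fin 2) (w : ℝ) (hw : 0 < w) :
    ∃ A : ℝ, 0 < A ∧ ∀ (η : ℝ), 0 < η → ∀ x y z : EuclideanSpace ℝ (Fin 2),
      |(if ‖x + y + z‖ ≤ η then (x + y + z) m * (x + y + z) l else 0) - x m * x l| ≤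
        w * ‖x‖ ^ 2 +
          A * ((‖x‖ ^ 4 + ‖y‖ ^ 4) / η ^ 2 + ‖y‖ ^ 2 + min (‖z‖ ^ 2) (η ^ 2)) :=
  ⟨10 + 2 * w⁻¹, by positivity, fun _ hη x y z =>
    abs_truncated_sub_le (fun u => u m * u l) (fun u => abs_apply_mul_apply_le u m l)
      (fun u v => abs_apply_mul_apply_sub_le u v m l) hw hη x y z⟩
end

section
/- Let L > 0 and let ψ : [0, ∞) → [0, 1] be a nonincreasing L-Lipschitz function with ψ(r) = 1 for r ∈ [0, 1] and ψ(r) = 0 for r ≥ 2. Define f : ℝ² → ℝ by f(x) = (x₁·x₂)² and, for η > 0, set f_η(x) = f(x)·ψ(‖x‖/η). Then there exists a constant K > 0, depending only on L, such that for all η > 0 and all x, y ∈ ℝ²: |f_η(x + y) − f_η(x)| ≤ K·η³·min(‖y‖, η). -/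
/-!
Write `φ(x) = ψ(‖x‖/η)`. Since `φ` vanishes outside the ball of radius `2η`, `|f_η| ≤ (3η)⁴/4`
everywhere, which settles `‖y‖ ≥ η`. If `‖y‖ ≤ η`, either `x` and `x + y` both lie outside the
`2η`-ball, or both lie in the `3η`-ball, where `f` is `2(3η)³`-Lipschitz, `|f| ≤ (3η)⁴/4` and `φ`
is `L/η`-Lipschitz; the product rule for differences gives the bound `O(η³)‖y‖`.
-/

lemma abs_mul_sub_mul_le (p q s t : ℝ) : |p * s - q * t| ≤ |p - q| * |s| + |q| * |s - t| := by
  calc |p * s - q * t| = |(p - q) * s + q * (s - t)| := by ring_nf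
    _ ≤ |p - q| * |s| + |q| * |s - t| := by
      rw [← abs_mul, ← abs_mul]; exact abs_add_le _ _

section Cutoff

variable {E : Type*} [SeminormedAddCommGroup E] {ψ : ℝ → ℝ} {f : E → ℝ} {L η M C : ℝ}

lemma cutoff_eq_zero (hη : 0 < η) (hzero : ∀ r, 2 ≤ r → ψ r = 0) {x : E} (hx : 2 * η ≤ ‖x‖) :
    ψ (‖x‖ / η) = 0 :=
  hzero _ (by rwa [le_div_iff₀ hη])

lemma abs_cutoff_sub_le (hL : 0 ≤ L) (hη : 0 < η)
    (hlip : ∀ r s, 0 ≤ r → 0 ≤ s → |ψ r - ψ s| ≤ L * |r - s|) (a b : E) :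
    |ψ (‖a‖ / η) - ψ (‖b‖ / η)| ≤ L / η * ‖a - b‖ := by
  calc |ψ (‖a‖ / η) - ψ (‖b‖ / η)| ≤ L * |‖a‖ / η - ‖b‖ / η| :=
        hlip _ _ (by positivity) (by positivity)
    _ = L / η * |‖a‖ - ‖b‖| := by rw [← sub_div, abs_div, abs_of_pos hη]; ring
    _ ≤ L / η * ‖a - b‖ := by gcongr; exact abs_norm_sub_norm_le a b

variable (hη : 0 < η) (hψ01 : ∀ r, 0 ≤ r → ψ r ∈ Set.Icc (0 : ℝ) 1)
  (hzero : ∀ r, 2 ≤ r → ψ r = 0) (hM : ∀ x, ‖x‖ ≤ 3 * η → |f x| ≤ M)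
include hη hψ01 hzero hM

lemma abs_mul_cutoff_le (x : E) : |f x * ψ (‖x‖ / η)| ≤ M := by
  rcases le_or_gt (2 * η) ‖x‖ with hfar | hnear
  · rw [cutoff_eq_zero hη hzero hfar, mul_zero, abs_zero]
    exact (abs_nonneg _).trans (hM 0 (by simp; positivity))
  · obtain ⟨hψ0, hψ1⟩ := hψ01 (‖x‖ / η) (by positivity)
    rw [abs_mul, abs_of_nonneg hψ0]
    exact (mul_le_of_le_one_right (abs_nonneg _) hψ1).trans (hM x (by linarith))

variable (hL : 0 ≤ L) (hC0 : 0 ≤ C)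
  (hlip : ∀ r s, 0 ≤ r → 0 ≤ s → |ψ r - ψ s| ≤ L * |r - s|)
  (hC : ∀ a b, ‖a‖ ≤ 3 * η → ‖b‖ ≤ 3 * η → |f a - f b| ≤ C * ‖a - b‖)
include hL hC0 hlip hC

lemma abs_mul_cutoff_add_sub_le_of_norm_le (x y : E) (hy : ‖y‖ ≤ η) :
    |f (x + y) * ψ (‖x + y‖ / η) - f x * ψ (‖x‖ / η)| ≤ (C + M * L / η) * ‖y‖ := by
  have hM0 : 0 ≤ M := (abs_nonneg _).trans (hM 0 (by simp; positivity))
  have hxy : ‖x + y‖ ≤ ‖x‖ + ‖y‖ := norm_add_le x y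
  have hyx : ‖x‖ ≤ ‖x + y‖ + ‖y‖ := by simpa using norm_sub_le (x + y) y
  by_cases hfar : 2 * η ≤ ‖x‖ ∧ 2 * η ≤ ‖x + y‖
  · rw [cutoff_eq_zero hη hzero hfar.1, cutoff_eq_zero hη hzero hfar.2]
    simp only [mul_zero, sub_zero, abs_zero]
    positivity
  obtain ⟨hx, hx'⟩ : ‖x‖ ≤ 3 * η ∧ ‖x + y‖ ≤ 3 * η := by
    rw [not_and_or] at hfar
    rcases hfar with h | h <;> constructor <;> linarith
  obtain ⟨hψ0, hψ1⟩ := hψ01 (‖x + y‖ / η) (by positivity)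
  have hdiff := hC _ _ hx' hx
  have hcut := abs_cutoff_sub_le hL hη hlip (x + y) x
  rw [add_sub_cancel_left] at hdiff hcut
  calc _ ≤ |f (x + y) - f x| * |ψ (‖x + y‖ / η)|
          + |f x| * |ψ (‖x + y‖ / η) - ψ (‖x‖ / η)| := abs_mul_sub_mul_le _ _ _ _
    _ ≤ C * ‖y‖ * 1 + M * (L / η * ‖y‖) := by
        gcongr
        · rwa [abs_of_nonneg hψ0]
        · exact hM x hx
    _ = (C + M * L / η) * ‖y‖ := by ring

lemma abs_mul_cutoff_add_sub_le (x y : E) :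
    |f (x + y) * ψ (‖x + y‖ / η) - f x * ψ (‖x‖ / η)| ≤
      (2 * M / η + C + M * L / η) * min ‖y‖ η := by
  have hM0 : 0 ≤ M := (abs_nonneg _).trans (hM 0 (by simp; positivity))
  rcases le_total ‖y‖ η with hy | hy
  · rw [min_eq_left hy]
    calc _ ≤ (C + M * L / η) * ‖y‖ :=
          abs_mul_cutoff_add_sub_le_of_norm_le hη hψ01 hzero hM hL hC0 hlip hC x y hy
      _ ≤ (2 * M / η + C + M * L / η) * ‖y‖ := by
          gcongr
          linarith [show 0 ≤ 2 * M / η by positivity]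
  · rw [min_eq_right hy]
    calc _ ≤ M + M := (abs_sub _ _).trans (add_le_add
          (abs_mul_cutoff_le hη hψ01 hzero hM _) (abs_mul_cutoff_le hη hψ01 hzero hM _))
      _ = 2 * M / η * η := by field_simp; ring
      _ ≤ (2 * M / η + C + M * L / η) * η := by
          gcongr
          linarith [show 0 ≤ M * L / η by positivity]

end Cutoff

namespace EuclideanSpace

lemma abs_apply_zero_mul_apply_one_le (x : EuclideanSpace ℝ (Fin 2)) :
    |x 0 * x 1| ≤ ‖x‖ ^ 2 / 2 := by
  have hnorm : ‖x‖ ^ 2 = x 0 ^ 2 + x 1 ^ 2 := by simp [real_norm_sq_eq, Fin.sum_univ_two]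
  rw [abs_mul]
  nlinarith [sq_nonneg (|x 0| - |x 1|), sq_abs (x 0), sq_abs (x 1)]

lemma abs_apply_zero_mul_apply_one_sub_le (a b : EuclideanSpace ℝ (Fin 2)) :
    |a 0 * a 1 - b 0 * b 1| ≤ (‖a‖ + ‖b‖) * ‖a - b‖ := by
  have h0 : |a 0 - b 0| ≤ ‖a - b‖ := PiLp.norm_apply_le (a - b) 0
  have h1 : |a 1 - b 1| ≤ ‖a - b‖ := PiLp.norm_apply_le (a - b) 1
  calc |a 0 * a 1 - b 0 * b 1| ≤ |a 0 - b 0| * |a 1| + |b 0| * |a 1 - b 1| :=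
        abs_mul_sub_mul_le _ _ _ _
    _ ≤ ‖a - b‖ * ‖a‖ + ‖b‖ * ‖a - b‖ := by
        gcongr
        · exact PiLp.norm_apply_le a 1
        · exact PiLp.norm_apply_le b 0
    _ = (‖a‖ + ‖b‖) * ‖a - b‖ := by ring

variable {R : ℝ}

lemma abs_sq_apply_zero_mul_apply_one_le {x : EuclideanSpace ℝ (Fin 2)} (hx : ‖x‖ ≤ R) :
    |(x 0 * x 1) ^ 2| ≤ R ^ 4 / 4 := by
  have hp := (abs_apply_zero_mul_apply_one_le x).trans
    (by gcongr : ‖x‖ ^ 2 / 2 ≤ R ^ 2 / 2)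
  calc |(x 0 * x 1) ^ 2| = |x 0 * x 1| ^ 2 := by rw [abs_pow]
    _ ≤ (R ^ 2 / 2) ^ 2 := by gcongr
    _ = R ^ 4 / 4 := by ring

lemma abs_sq_apply_zero_mul_apply_one_sub_le {a b : EuclideanSpace ℝ (Fin 2)}
    (ha : ‖a‖ ≤ R) (hb : ‖b‖ ≤ R) :
    |(a 0 * a 1) ^ 2 - (b 0 * b 1) ^ 2| ≤ 2 * R ^ 3 * ‖a - b‖ := by
  have hsum : |a 0 * a 1 + b 0 * b 1| ≤ R ^ 2 :=
    calc _ ≤ ‖a‖ ^ 2 / 2 + ‖b‖ ^ 2 / 2 := (abs_add_le _ _).trans (add_le_add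
          (abs_apply_zero_mul_apply_one_le a) (abs_apply_zero_mul_apply_one_le b))
      _ ≤ R ^ 2 / 2 + R ^ 2 / 2 := by gcongr
      _ = R ^ 2 := by ring
  calc |(a 0 * a 1) ^ 2 - (b 0 * b 1) ^ 2|
      = |a 0 * a 1 - b 0 * b 1| * |a 0 * a 1 + b 0 * b 1| := by rw [← abs_mul]; ring_nf
    _ ≤ ((R + R) * ‖a - b‖) * R ^ 2 := by
        gcongr
        · have hR : 0 ≤ R := (norm_nonneg a).trans ha
          positivity
        · exact (abs_apply_zero_mul_apply_one_sub_le a b).trans (by gcongr)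
    _ = 2 * R ^ 3 * ‖a - b‖ := by ring

end EuclideanSpace

open EuclideanSpace in
theorem truncated_f_lipschitz_bound_general (L : ℝ) (hL : 0 < L) (ψ : ℝ → ℝ)
    (hψ01 : ∀ r, 0 ≤ r → ψ r ∈ Set.Icc (0 : ℝ) 1)
    (hlip : ∀ r s, 0 ≤ r → 0 ≤ s → |ψ r - ψ s| ≤ L * |r - s|)
    (hzero : ∀ r, 2 ≤ r → ψ r = 0) :
    ∃ K : ℝ, 0 < K ∧ ∀ (η : ℝ), 0 < η → ∀ x y : EuclideanSpace ℝ (Fin 2),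
      |((x 0 + y 0) * (x 1 + y 1)) ^ 2 * ψ (‖x + y‖ / η) -
          (x 0 * x 1) ^ 2 * ψ (‖x‖ / η)| ≤ K * η ^ 3 * min ‖y‖ η := by
  refine ⟨189 / 2 + 81 / 4 * L, by positivity, fun η hη x y => ?_⟩
  have hbound := abs_mul_cutoff_add_sub_le (f := fun x => (x 0 * x 1) ^ 2)
    (M := (3 * η) ^ 4 / 4) (C := 2 * (3 * η) ^ 3) hη hψ01 hzero
    (fun _ => abs_sq_apply_zero_mul_apply_one_le) hL.le (by positivity) hlip
    (fun _ _ => abs_sq_apply_zero_mul_apply_one_sub_le) x y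
  refine hbound.trans_eq ?_
  congr 1
  field_simp
  ring

/-- Let `L > 0` and let `ψ : [0,∞) → [0,1]` be nonincreasing, `L`-Lipschitz, with `ψ = 1` on
`[0,1]` and `ψ = 0` on `[2,∞)`. With `f(x) = (x₁·x₂)²` and `f_η(x) = f(x)·ψ(‖x‖/η)`, there is a
constant `K > 0` depending only on `L` with
`|f_η(x+y) − f_η(x)| ≤ K·η³·min(‖y‖, η)` for all `η > 0` and `x, y ∈ ℝ²`. -/
theorem truncated_f_lipschitz_bound (L : ℝ) (hL : 0 < L) (ψ : ℝ → ℝ)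
    (hψ01 : ∀ r, 0 ≤ r → ψ r ∈ Set.Icc (0 : ℝ) 1)
    (hanti : ∀ r s, 0 ≤ r → r ≤ s → ψ s ≤ ψ r)
    (hlip : ∀ r s, 0 ≤ r → 0 ≤ s → |ψ r - ψ s| ≤ L * |r - s|)
    (hone : ∀ r, 0 ≤ r → r ≤ 1 → ψ r = 1)
    (hzero : ∀ r, 2 ≤ r → ψ r = 0) :
    ∃ K : ℝ, 0 < K ∧ ∀ (η : ℝ), 0 < η → ∀ x y : EuclideanSpace ℝ (Fin 2),
      |((x 0 + y 0) * (x 1 + y 1)) ^ 2 * ψ (‖x + y‖ / η) -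
          (x 0 * x 1) ^ 2 * ψ (‖x‖ / η)| ≤ K * η ^ 3 * min ‖y‖ η :=
  truncated_f_lipschitz_bound_general L hL ψ hψ01 hlip hzero
end

section
/- Let h : ℝ² → ℝ be a continuous function with compact support such that h(x) = o(‖x‖²) as x → 0. Then there exists a continuous function θ : ℝ → [0, ∞) with θ(y) = o(y²) as y → 0 such that |h(x)| ≤ θ(x₁) + θ(x₂) for all x = (x₁, x₂) ∈ ℝ². -/
/-! `θ(y)` is the maximum of `|h|` over the square `y • [-1, 1]²`. This is continuous in `y`
because it is the maximum over a fixed compact set of the jointly continuous function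
`(y, u) ↦ |h (y • u)|`; it is `o(y²)` because the square shrinks to the origin at rate `|y|`; and
every `x` lies in the square `max(|x₁|, |x₂|) • [-1, 1]²`. -/

open Asymptotics Topology Filter Set

noncomputable def supAbsOnDilate {E : Type*} [SMul ℝ E] (f : E → ℝ) (K : Set E) (y : ℝ) : ℝ :=
  sSup ((fun u => |f (y • u)|) '' K)

section SupAbsOnDilate

variable {E : Type*} [NormedAddCommGroup E] [NormedSpace ℝ E] {f : E → ℝ} {K : Set E}

theorem supAbsOnDilate_nonneg (y : ℝ) : 0 ≤ supAbsOnDilate f K y :=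
  Real.sSup_nonneg <| forall_mem_image.2 fun _ _ => abs_nonneg _

theorem continuous_supAbsOnDilate (hf : Continuous f) (hK : IsCompact K) :
    Continuous (supAbsOnDilate f K) :=
  hK.continuous_sSup (f := fun y u => |f (y • u)|) (hf.comp continuous_smul).abs

theorem abs_le_supAbsOnDilate (hf : Continuous f) (hK : IsCompact K) {u : E} (hu : u ∈ K)
    (y : ℝ) : |f (y • u)| ≤ supAbsOnDilate f K y :=
  le_csSup (hK.image_of_continuousOn (hf.comp (continuous_const_smul y)).abs.continuousOn).bddAbove
    (mem_image_of_mem (fun u => |f (y • u)|) hu)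

theorem supAbsOnDilate_isLittleO (hK : IsCompact K) {n : ℕ}
    (hf : f =o[𝓝 0] fun x => ‖x‖ ^ n) :
    supAbsOnDilate f K =o[𝓝 0] fun y => y ^ n := by
  obtain ⟨R, hR, hKR⟩ := hK.isBounded.exists_pos_norm_le
  refine isLittleO_iff.2 fun c hc => ?_
  have hfc : ∀ᶠ x in 𝓝 (0 : E), |f x| ≤ c / R ^ n * ‖x‖ ^ n := by
    simpa using isLittleO_iff.1 hf (c := c / R ^ n) (by positivity)
  have hsmul : ∀ᶠ y in 𝓝 (0 : ℝ), ∀ u ∈ K, |f (y • u)| ≤ c / R ^ n * ‖y • u‖ ^ n :=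
    hK.eventually_forall_of_forall_eventually fun u _ => by
      have hu : Tendsto (fun z : ℝ × E => z.1 • z.2) (𝓝 (0, u)) (𝓝 0) := by
        simpa using continuous_smul.tendsto ((0 : ℝ), u)
      exact hu.eventually hfc
  filter_upwards [hsmul] with y hy
  rw [Real.norm_of_nonneg (supAbsOnDilate_nonneg y), norm_pow, Real.norm_eq_abs]
  refine Real.sSup_le (forall_mem_image.2 fun u hu => ?_) (by positivity)
  calc |f (y • u)| ≤ c / R ^ n * ‖y • u‖ ^ n := hy u hu
    _ ≤ c / R ^ n * (|y| * R) ^ n := by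
      gcongr
      rw [norm_smul, Real.norm_eq_abs]
      exact mul_le_mul_of_nonneg_left (hKR u hu) (abs_nonneg y)
    _ = c * |y| ^ n := by field_simp; ring

end SupAbsOnDilate

def unitCube (ι : Type*) : Set (EuclideanSpace ℝ ι) :=
  {u | ∀ i, |u i| ≤ 1}

section UnitCube

variable {ι : Type*}

theorem isCompact_unitCube [Fintype ι] : IsCompact (unitCube ι) := by
  have hcube : unitCube ι = EuclideanSpace.equiv ι ℝ ⁻¹' Metric.closedBall 0 1 := by
    ext u
    simp [unitCube, pi_norm_le_iff_of_nonneg]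
  rw [hcube]
  exact (EuclideanSpace.equiv ι ℝ).toHomeomorph.isCompact_preimage.2 (isCompact_closedBall 0 1)

theorem exists_mem_unitCube_eq_smul (x : EuclideanSpace ℝ ι) {i : ι}
    (hi : ∀ j, |x j| ≤ |x i|) : ∃ u ∈ unitCube ι, x = x i • u := by
  by_cases hxi : x i = 0
  · refine ⟨0, fun j => by simp, ?_⟩
    ext j
    simpa [hxi] using hi j
  · refine ⟨(x i)⁻¹ • x, fun j => ?_, by rw [smul_inv_smul₀ hxi]⟩
    rw [PiLp.smul_apply, smul_eq_mul, abs_mul, abs_inv, inv_mul_le_one₀ (abs_pos.2 hxi)]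
    exact hi j

end UnitCube

theorem domination_by_one_dimensional_general (h : EuclideanSpace ℝ (Fin 2) → ℝ)
    (hc : Continuous h)
    (ho : h =o[𝓝 (0 : EuclideanSpace ℝ (Fin 2))] fun x => ‖x‖ ^ 2) :
    ∃ θ : ℝ → ℝ, Continuous θ ∧ (∀ y, 0 ≤ θ y) ∧
      (θ =o[𝓝 (0 : ℝ)] fun y : ℝ => y ^ 2) ∧
      ∀ x : EuclideanSpace ℝ (Fin 2), |h x| ≤ θ (x 0) + θ (x 1) := by
  set θ := supAbsOnDilate h (unitCube (Fin 2))
  have hdom : ∀ x i, (∀ j, |x j| ≤ |x i|) → |h x| ≤ θ (x i) := fun x i hi => by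
    obtain ⟨u, hu, hxu⟩ := exists_mem_unitCube_eq_smul x hi
    simpa only [← hxu] using abs_le_supAbsOnDilate hc isCompact_unitCube hu (x i)
  refine ⟨θ, continuous_supAbsOnDilate hc isCompact_unitCube, supAbsOnDilate_nonneg,
    supAbsOnDilate_isLittleO isCompact_unitCube ho, fun x => ?_⟩
  rcases le_total |x 1| |x 0| with hx | hx
  · exact (hdom x 0 (Fin.forall_fin_two.2 ⟨le_rfl, hx⟩)).trans
      (le_add_of_nonneg_right (supAbsOnDilate_nonneg _))
  · exact (hdom x 1 (Fin.forall_fin_two.2 ⟨hx, le_rfl⟩)).trans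
      (le_add_of_nonneg_left (supAbsOnDilate_nonneg _))

/-- Let `h : ℝ² → ℝ` be continuous with compact support and `h(x) = o(‖x‖²)` as `x → 0`. Then
there is a continuous nonnegative `θ : ℝ → ℝ` with `θ(y) = o(y²)` as `y → 0` dominating `|h|`:
`|h(x)| ≤ θ(x₁) + θ(x₂)` for all `x ∈ ℝ²`. -/
theorem domination_by_one_dimensional (h : EuclideanSpace ℝ (Fin 2) → ℝ)
    (hc : Continuous h) (hsupp : HasCompactSupport h)
    (ho : h =o[𝓝 (0 : EuclideanSpace ℝ (Fin 2))] fun x => ‖x‖ ^ 2) :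
    ∃ θ : ℝ → ℝ, Continuous θ ∧ (∀ y, 0 ≤ θ y) ∧
      (θ =o[𝓝 (0 : ℝ)] fun y : ℝ => y ^ 2) ∧
      ∀ x : EuclideanSpace ℝ (Fin 2), |h x| ≤ θ (x 0) + θ (x 1) :=
  domination_by_one_dimensional_general h hc ho
end

section
/- Let (Y_i)_{i≥1} be i.i.d. positive real random variables whose common distribution is atomless, and let Z : (0, 1) → ℝ satisfy P(Y₁ > Z(x)) = x for every x ∈ (0, 1). Fix α ∈ (0, 1), an integer N with N > 4/(α(1−α)), and ε ∈ (4/N, α(1−α)). Let V be the ⌊αN⌋-th largest value among Y₁, …, Y_N (almost surely well-defined since the Y_i are almost surely pairwise distinct). Then P( V ∉ [Z(α+ε), Z(α−ε)] ) ≤ 5/(4·N·ε²). -/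
/-!
If `V ∉ [Z(α+ε), Z(α−ε)]`, one of the binomial counts `#{i < N | Z(α∓ε) < Yᵢ}`, whose mean is
`N(α∓ε)`, misses its mean by at least `Nε − 1`: if `V < Z(α+ε)`, only the `⌊αN⌋ − 1` values above
`V` can exceed `Z(α+ε)`; if `V > Z(α−ε)`, then `V` and the values above it, at least `⌊αN⌋` in
number, all exceed `Z(α−ε)`. Chebyshev's inequality bounds each of the two deviation probabilities
by `N / (4(Nε − 1)²)`, and `Nε > 4` makes their sum at most `5 / (4Nε²)`.
-/

open MeasureTheory ProbabilityTheory Finset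

section BernoulliCount

variable {Ω ι β : Type*} [MeasurableSpace Ω] {P : Measure Ω} [IsProbabilityMeasure P]

theorem variance_indicator_one {E : Set Ω} (hE : MeasurableSet E) :
    variance (E.indicator 1) P = P.real E * (1 - P.real E) := by
  have hL2 : MemLp (E.indicator (1 : Ω → ℝ)) 2 P :=
    memLp_indicator_const 2 hE 1 (Or.inr (measure_ne_top _ _))
  have hsq : E.indicator (1 : Ω → ℝ) ^ 2 = E.indicator 1 := by
    ext ω; by_cases h : ω ∈ E <;> simp [h]
  rw [variance_eq_sub hL2, hsq, integral_indicator_one hE]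
  ring

variable [MeasurableSpace β] {X : ι → Ω → β} {A : Set β} [DecidablePred (· ∈ A)] {p c : ℝ}

theorem meas_le_abs_card_filter_sub_le (hX : ∀ i, Measurable (X i))
    (hindep : Pairwise fun i j => IndepFun (X i) (X j) P) (hA : MeasurableSet A)
    (hp : ∀ i, P.real (X i ⁻¹' A) = p) (s : Finset ι) (hc : 0 < c) :
    P {ω | c ≤ |(#{i ∈ s | X i ω ∈ A} : ℝ) - #s * p|} ≤
      ENNReal.ofReal (#s * (p * (1 - p)) / c ^ 2) := by
  have hind : Measurable (A.indicator (1 : β → ℝ)) := measurable_one.indicator hA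
  set f : ι → Ω → ℝ := fun i => A.indicator 1 ∘ X i
  have hf : ∀ i, f i = (X i ⁻¹' A).indicator 1 := fun i => by
    ext ω; by_cases h : X i ω ∈ A <;> simp [f, h]
  have hL2 : ∀ i, MemLp (f i) 2 P := fun i => by
    rw [hf]; exact memLp_indicator_const 2 (hX i hA) 1 (Or.inr (measure_ne_top _ _))
  have hcount : ∀ ω, (∑ i ∈ s, f i) ω = #{i ∈ s | X i ω ∈ A} := fun ω => by
    simp [f, Finset.sum_apply, Set.indicator_apply]
  have hmean : P[∑ i ∈ s, f i] = #s * p := by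
    simp only [Finset.sum_apply]
    rw [integral_finsetSum s fun i _ => (hL2 i).integrable one_le_two]
    simp [hf, integral_indicator_one (hX _ hA), hp]
  have hvar : variance (∑ i ∈ s, f i) P = #s * (p * (1 - p)) := by
    rw [IndepFun.variance_sum (fun i _ => hL2 i)
      fun i _ j _ hij => (hindep hij).comp hind hind]
    simp [hf, variance_indicator_one (hX _ hA), hp]
  have := meas_ge_le_variance_div_sq (memLp_finsetSum' s fun i _ => hL2 i) hc
  rw [hmean, hvar] at this
  simpa only [hcount] using this

theorem meas_le_abs_card_filter_sub_le_div (hX : ∀ i, Measurable (X i))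
    (hindep : Pairwise fun i j => IndepFun (X i) (X j) P) (hA : MeasurableSet A)
    (hp : ∀ i, P.real (X i ⁻¹' A) = p) (s : Finset ι) (hc : 0 < c) :
    P {ω | c ≤ |(#{i ∈ s | X i ω ∈ A} : ℝ) - #s * p|} ≤ ENNReal.ofReal (#s / (4 * c ^ 2)) := by
  refine (meas_le_abs_card_filter_sub_le hX hindep hA hp s hc).trans (ENNReal.ofReal_le_ofReal ?_)
  have hquarter : p * (1 - p) ≤ 1 / 4 := by nlinarith [sq_nonneg (p - 1 / 2)]
  calc (#s : ℝ) * (p * (1 - p)) / c ^ 2 ≤ #s * (1 / 4) / c ^ 2 := by gcongr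
    _ = #s / (4 * c ^ 2) := by ring

end BernoulliCount

section KthLargest

variable {ι : Type*}

-- For `k = 0` the truncated `k - 1` makes this the maximum, as for `k = 1`.
def IsKthLargest (s : Finset ι) (y : ι → ℝ) (k : ℕ) (v : ℝ) : Prop :=
  (∃ i ∈ s, v = y i) ∧ #{i ∈ s | v < y i} = k - 1

namespace IsKthLargest

variable {s : Finset ι} {y : ι → ℝ} {k : ℕ} {v a b : ℝ}

theorem card_filter_le_or_le_card_filter (h : IsKthLargest s y k v) (hvab : v ∉ Set.Icc a b) :
    #{i ∈ s | a < y i} ≤ k - 1 ∨ k ≤ #{i ∈ s | b < y i} := by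
  classical
  obtain ⟨⟨i₀, hi₀, rfl⟩, hcard⟩ := h
  rcases not_and_or.1 hvab with hlt | hgt
  · rw [← hcard]
    exact .inl <| card_le_card <| monotone_filter_right s fun i _ h => (not_le.1 hlt).trans h
  · have hsub : insert i₀ {i ∈ s | y i₀ < y i} ⊆ {i ∈ s | b < y i} :=
      insert_subset (by simpa [hi₀] using not_le.1 hgt)
        (monotone_filter_right s fun i _ h => (not_le.1 hgt).trans h)
    have := card_le_card hsub
    rw [card_insert_of_notMem (by simp), hcard] at this
    exact .inr (by omega)

theorem card_filter_le_or_lt_card_filter_add_one {t : ℝ} (h : IsKthLargest s y ⌊t⌋₊ v)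
    (ht : 0 ≤ t) (hvab : v ∉ Set.Icc a b) :
    (#{i ∈ s | a < y i} : ℝ) ≤ t ∨ t < #{i ∈ s | b < y i} + 1 := by
  refine (h.card_filter_le_or_le_card_filter hvab).imp (fun hle => ?_) (fun hle => ?_)
  · exact (Nat.cast_le.2 (hle.trans (Nat.sub_le _ 1))).trans (Nat.floor_le ht)
  · exact (Nat.lt_floor_add_one t).trans_le (by exact_mod_cast Nat.add_le_add_right hle 1)

end IsKthLargest

end KthLargest

theorem div_sq_sub_one_add_self_le {n ε : ℝ} (hn : 0 < n) (hnε : 4 < n * ε) :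
    n / (4 * (n * ε - 1) ^ 2) + n / (4 * (n * ε - 1) ^ 2) ≤ 5 / (4 * n * ε ^ 2) := by
  have hε : 0 < ε := pos_of_mul_pos_right (by linarith) hn.le
  rw [← two_mul, ← mul_div_assoc, div_le_div_iff₀ (by nlinarith) (by positivity)]
  nlinarith

theorem empirical_quantile_concentration_general {Ω : Type*} [MeasurableSpace Ω]
    (P : Measure Ω) [IsProbabilityMeasure P]
    (Y : ℕ → Ω → ℝ) (hmeas : ∀ i, Measurable (Y i))
    (hindep : iIndepFun Y P)
    (hident : ∀ i, IdentDistrib (Y i) (Y 0) P P)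
    (Z : ℝ → ℝ) (hZ : ∀ x ∈ Set.Ioo (0 : ℝ) 1, P {ω | Z x < Y 0 ω} = ENNReal.ofReal x)
    (α : ℝ) (hα : α ∈ Set.Ioo (0 : ℝ) 1)
    (N : ℕ)
    (ε : ℝ) (hε1 : 4 / (N : ℝ) < ε) (hε2 : ε < α * (1 - α))
    (V : Ω → ℝ)
    (hV : ∀ᵐ ω ∂P, (∃ i < N, V ω = Y i ω) ∧
      ((Finset.range N).filter fun i => V ω < Y i ω).card = ⌊α * N⌋₊ - 1) :
    P {ω | V ω ∉ Set.Icc (Z (α + ε)) (Z (α - ε))} ≤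
      ENNReal.ofReal (5 / (4 * N * ε ^ 2)) := by
  obtain ⟨hα0, hα1⟩ := hα
  have hN : (0 : ℝ) < N := by
    obtain ⟨ω, ⟨i, hi, -⟩, -⟩ := hV.exists
    exact_mod_cast (Nat.zero_le i).trans_lt hi
  have hε : 0 < ε := (div_pos four_pos hN).trans hε1
  have hNε : 4 < N * ε := by rwa [div_lt_iff₀ hN, mul_comm] at hε1
  set c := (N : ℝ) * ε - 1
  set A : ℝ → Set Ω := fun x => {ω | c ≤ |(#{i ∈ range N | Z x < Y i ω} : ℝ) - N * x|}
  have hA : ∀ x ∈ Set.Ioo (0 : ℝ) 1, P (A x) ≤ ENNReal.ofReal (N / (4 * c ^ 2)) := by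
    intro x hx
    have hp i : P.real (Y i ⁻¹' Set.Ioi (Z x)) = x := by
      rw [measureReal_def, (hident i).measure_mem_eq measurableSet_Ioi]
      exact (congrArg ENNReal.toReal (hZ x hx)).trans (ENNReal.toReal_ofReal hx.1.le)
    simpa only [Set.mem_Ioi, card_range] using meas_le_abs_card_filter_sub_le_div hmeas
      (fun i j hij => hindep.indepFun hij) measurableSet_Ioi hp (range N) (by linarith)
  have hbad : {ω | V ω ∉ Set.Icc (Z (α + ε)) (Z (α - ε))} ≤ᵐ[P]
      (A (α + ε) ∪ A (α - ε) : Set Ω) := by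
    filter_upwards [hV] with ω ⟨⟨i, hi, hVi⟩, hcard⟩ hω
    have hkth : IsKthLargest (range N) (Y · ω) ⌊α * N⌋₊ (V ω) :=
      ⟨⟨i, mem_range.2 hi, hVi⟩, hcard⟩
    rcases hkth.card_filter_le_or_lt_card_filter_add_one (by positivity) hω with h | h
    · exact .inl (le_abs'.2 (.inl (show _ ≤ -c by linarith)))
    · exact .inr (le_abs'.2 (.inr (show c ≤ _ by linarith)))
  calc P {ω | V ω ∉ Set.Icc (Z (α + ε)) (Z (α - ε))}
      ≤ P (A (α + ε)) + P (A (α - ε)) := (measure_mono_ae hbad).trans (measure_union_le _ _)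
    _ ≤ ENNReal.ofReal (N / (4 * c ^ 2)) + ENNReal.ofReal (N / (4 * c ^ 2)) :=
      add_le_add (hA _ ⟨by linarith, by nlinarith⟩) (hA _ ⟨by nlinarith, by linarith⟩)
    _ ≤ ENNReal.ofReal (5 / (4 * N * ε ^ 2)) := by
      rw [← ENNReal.ofReal_add (by positivity) (by positivity)]
      exact ENNReal.ofReal_le_ofReal (div_sq_sub_one_add_self_le hN hNε)

/-- Let `(Y_i)` be i.i.d. positive real random variables with atomless common law, and let
`Z : (0,1) → ℝ` satisfy `P(Y₀ > Z(x)) = x`. Fix `α ∈ (0,1)`, `N > 4/(α(1−α))` and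
`ε ∈ (4/N, α(1−α))`. If `V` is the `⌊αN⌋`-th largest value among `Y₀, …, Y_{N−1}` (i.e. a.s.
`V` equals some `Y_i`, `i < N`, and exactly `⌊αN⌋ − 1` of the `Y_i`, `i < N`, exceed `V`), then
`P(V ∉ [Z(α+ε), Z(α−ε)]) ≤ 5/(4·N·ε²)`. -/
theorem empirical_quantile_concentration {Ω : Type*} [MeasurableSpace Ω]
    (P : Measure Ω) [IsProbabilityMeasure P]
    (Y : ℕ → Ω → ℝ) (hmeas : ∀ i, Measurable (Y i))
    (hindep : iIndepFun Y P)
    (hident : ∀ i, IdentDistrib (Y i) (Y 0) P P)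
    (hpos : ∀ i ω, 0 < Y i ω)
    (hatomless : ∀ a : ℝ, P {ω | Y 0 ω = a} = 0)
    (Z : ℝ → ℝ) (hZ : ∀ x ∈ Set.Ioo (0 : ℝ) 1, P {ω | Z x < Y 0 ω} = ENNReal.ofReal x)
    (α : ℝ) (hα : α ∈ Set.Ioo (0 : ℝ) 1)
    (N : ℕ) (hN : 4 / (α * (1 - α)) < (N : ℝ))
    (ε : ℝ) (hε1 : 4 / (N : ℝ) < ε) (hε2 : ε < α * (1 - α))
    (V : Ω → ℝ)
    (hV : ∀ᵐ ω ∂P, (∃ i < N, V ω = Y i ω) ∧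
      ((Finset.range N).filter fun i => V ω < Y i ω).card = ⌊α * N⌋₊ - 1) :
    P {ω | V ω ∉ Set.Icc (Z (α + ε)) (Z (α - ε))} ≤
      ENNReal.ofReal (5 / (4 * N * ε ^ 2)) :=
  empirical_quantile_concentration_general P Y hmeas hindep hident Z hZ α hα N ε hε1 hε2 V hV
end
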